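/- Let G be the time-invariant dynamic Bayesian network DAG of the environment and suppose the joint distribution of the variables satisfies the global Markov condition and faithfulness with respect to G. Then for every index i ∈ {1,…,d}, the entry c^{g→r}_i = 1 if and only if the reward r_t is NOT conditionally independent of g_{i,t-1} given the remaining previous-slice latent components g_{\{1,…,d\}∖\{i\}, t-1} and the action a_{t-1}. -/
import Mathlib


open Relation

/-- Nodes of the time-invariant dynamic Bayesian network: latent state
components `g_{i,t}`, actions `a_t`, and rewards `r_t`. -/
inductive DBNNode (d : ℕ) : Type where
  | latent (i : Fin d) (t : ℕ)
  | action (t : ℕ)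
  | reward (t : ℕ)
deriving DecidableEq

/-- The fixed binary structural masks of the DBN.  `cgg i j = true` encodes the
edge `g_{j,t-1} → g_{i,t}`, `cag i` the edge `a_{t-1} → g_{i,t}`, `cgr i` the
edge `g_{i,t-1} → r_t`, and `car` the edge `a_{t-1} → r_t`. -/
structure DBNMasks (d : ℕ) where
  cgg : Fin d → Fin d → Bool
  cag : Fin d → Bool
  cgr : Fin d → Bool
  car : Bool

/-- The directed edges of the time-invariant DBN graph `G`. -/
def DBNEdge {d : ℕ} (c : DBNMasks d) : DBNNode d → DBNNode d → Prop
  | .latent j t, .latent i t' => t' = t + 1 ∧ c.cgg i j = true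
  | .action t, .latent i t' => t' = t + 1 ∧ c.cag i = true
  | .latent i t, .reward t' => t' = t + 1 ∧ c.cgr i = true
  | .action t, .reward t' => t' = t + 1 ∧ c.car = true
  | _, _ => False

/-- Undirected adjacency induced by a directed edge relation. -/
def Adj {V : Type*} (E : V → V → Prop) (x y : V) : Prop := E x y ∨ E y x

/-- `p` is a (simple, undirected) path in the graph with edge relation `E`:
consecutive nodes are adjacent and no node repeats. -/
def IsPathList {V : Type*} (E : V → V → Prop) (p : List V) : Prop :=
  p.Chain' (Adj E) ∧ p.Nodup

/-- A path `p` is blocked by the conditioning set `Z`: it contains a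
chain `u → m → v` (in either direction) or a fork `u ← m → v` with middle
node `m ∈ Z`, or a collider `u → m ← v` with `m ∉ Z` and no descendant of
`m` in `Z`. -/
def BlockedBy {V : Type*} (E : V → V → Prop) (Z : Set V) (p : List V) : Prop :=
  ∃ u m v : V, [u, m, v] <:+: p ∧
    ((((E u m ∧ E m v) ∨ (E v m ∧ E m u) ∨ (E m u ∧ E m v)) ∧ m ∈ Z) ∨
      ((E u m ∧ E v m) ∧ m ∉ Z ∧ ∀ w : V, Relation.TransGen E m w → w ∉ Z))

/-- `Z` d-separates `X` from `Y` in the graph with edge relation `E`: every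
path between a node of `X` and a node of `Y` is blocked by `Z`. -/
def DSep {V : Type*} (E : V → V → Prop) (X Y Z : Set V) : Prop :=
  ∀ x ∈ X, ∀ y ∈ Y, ∀ p : List V,
    IsPathList E p → p.head? = some x → p.getLast? = some y → BlockedBy E Z p

/-- The joint distribution (represented abstractly by its ternary conditional
independence relation `CI X Y Z`, "X ⫫ Y given Z") satisfies the global Markov
condition w.r.t. the graph: d-separation implies conditional independence. -/
def GlobalMarkov {V : Type*} (E : V → V → Prop)
    (CI : Set V → Set V → Set V → Prop) : Prop :=
  ∀ X Y Z : Set V, Disjoint X Y → Disjoint X Z → Disjoint Y Z →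
    DSep E X Y Z → CI X Y Z

/-- The joint distribution is faithful to the graph: every conditional
independence corresponds to a d-separation. -/
def FaithfulTo {V : Type*} (E : V → V → Prop)
    (CI : Set V → Set V → Set V → Prop) : Prop :=
  ∀ X Y Z : Set V, Disjoint X Y → Disjoint X Z → Disjoint Y Z →
    CI X Y Z → DSep E X Y Z

/-- `g_{i,t} ∈ g_t^min` iff `c_i^{g→r} = 1` or `g_{i,t}` has a directed path in
`G` to a future reward `r_{t+k}` (some `k > 0`) passing through other latent
state components. -/
def InMinSet {d : ℕ} (c : DBNMasks d) (i : Fin d) (t : ℕ) : Prop :=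
  c.cgr i = true ∨
    ∃ k : ℕ, 0 < k ∧ ∃ (j : Fin d) (s : ℕ),
      Relation.TransGen (DBNEdge c) (DBNNode.latent i t) (DBNNode.latent j s) ∧
      Relation.TransGen (DBNEdge c) (DBNNode.latent j s) (DBNNode.reward (t + k))

/-- The minimal latent state set `g_t^min`, as a set of nodes of `G`. -/
def MinSet {d : ℕ} (c : DBNMasks d) (t : ℕ) : Set (DBNNode d) :=
  {n | ∃ i : Fin d, n = DBNNode.latent i t ∧ InMinSet c i t}

/-- Under the global Markov condition and faithfulness, `c^{g→r}_i = 1` iff the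
reward `r_t` is conditionally dependent on `g_{i,t-1}` given the remaining
previous-slice latent components and the action `a_{t-1}`. -/
theorem cgr_identification (d : ℕ) (c : DBNMasks d)
    (CI : Set (DBNNode d) → Set (DBNNode d) → Set (DBNNode d) → Prop)
    (hMarkov : GlobalMarkov (DBNEdge c) CI)
    (hFaithful : FaithfulTo (DBNEdge c) CI) (i : Fin d) (t : ℕ) :
    c.cgr i = true ↔
      ¬ CI {DBNNode.reward (t + 1)} {DBNNode.latent i t}
        ({n : DBNNode d | ∃ j : Fin d, j ≠ i ∧ n = DBNNode.latent j t} ∪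
          {DBNNode.action t}) := by
  set Z : Set (DBNNode d) :=
    ({n : DBNNode d | ∃ j : Fin d, j ≠ i ∧ n = DBNNode.latent j t} ∪
      {DBNNode.action t}) with hZdef
  have hrewZ : DBNNode.reward (t + 1) ∉ Z := by
    rintro (⟨j, hj, h⟩ | h) <;> simp_all [hZdef]
  have hlatZ : DBNNode.latent i t ∉ Z := by
    rintro (⟨j, hj, h⟩ | h) <;> simp_all [hZdef]
  have hXY : Disjoint ({DBNNode.reward (t + 1)} : Set (DBNNode d))
      {DBNNode.latent i t} := by simp
  have hXZ : Disjoint ({DBNNode.reward (t + 1)} : Set (DBNNode d)) Z :=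
    Set.disjoint_singleton_left.mpr hrewZ
  have hYZ : Disjoint ({DBNNode.latent i t} : Set (DBNNode d)) Z :=
    Set.disjoint_singleton_left.mpr hlatZ
  constructor
  · intro hc hCI
    have hsep := hFaithful _ _ _ hXY hXZ hYZ hCI
    have hblk := hsep (DBNNode.reward (t + 1)) rfl (DBNNode.latent i t) rfl
      [DBNNode.reward (t + 1), DBNNode.latent i t]
      ⟨by
        refine List.isChain_cons_cons.mpr ⟨Or.inr ?_, by simp⟩
        exact ⟨rfl, hc⟩, by simp⟩ rfl (by simp)
    obtain ⟨u, m, v, hinf, -⟩ := hblk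
    have := hinf.length_le
    simp at this
  · intro hnCI
    by_contra hc
    have hc' : c.cgr i = false := by simpa using hc
    apply hnCI
    apply hMarkov _ _ _ hXY hXZ hYZ
    intro x hx y hy p hp hhead hlast
    simp only [Set.mem_singleton_iff] at hx hy
    subst hx; subst hy
    match p with
    | [] => simp at hhead
    | [a] =>
        simp at hhead hlast
        rw [hhead] at hlast
        exact absurd hlast (by simp)
    | a :: b :: rest =>
        have ha : a = DBNNode.reward (t + 1) := by simpa using hhead
        subst ha
        obtain ⟨hchain, hnodup⟩ := hp
        have hab : Adj (DBNEdge c) (DBNNode.reward (t + 1)) b :=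
          (List.isChain_cons_cons.mp hchain).1
        have hchain' := (List.isChain_cons_cons.mp hchain).2
        have hba : DBNEdge c b (DBNNode.reward (t + 1)) := by
          rcases hab with h | h
          · cases b <;> exact absurd h (by simp [DBNEdge])
          · exact h
        -- identify b
        have hbZ : b ∈ Z := by
          cases b with
          | latent j s =>
              obtain ⟨hs, hj⟩ := hba
              have hst : s = t := by omega
              subst hst
              have hji : j ≠ i := by
                rintro rfl; rw [hj] at hc'; exact absurd hc' (by simp)
              exact Or.inl ⟨j, hji, rfl⟩
          | action s =>
              obtain ⟨hs, -⟩ := hba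
              have hst : s = t := by omega
              subst hst
              exact Or.inr rfl
          | reward s => exact absurd hba (by simp [DBNEdge])
        match rest with
        | [] =>
            have hb : b = DBNNode.latent i t := by simpa using hlast
            subst hb
            exact absurd hbZ hlatZ
        | v :: rest' =>
            have hbv : Adj (DBNEdge c) b v := (List.isChain_cons_cons.mp hchain').1
            refine ⟨DBNNode.reward (t + 1), b, v, ⟨[], rest', rfl⟩, Or.inl ⟨?_, hbZ⟩⟩
            rcases hbv with h | h
            · exact Or.inr (Or.inr ⟨hba, h⟩)
            · exact Or.inr (Or.inl ⟨h, hba⟩)
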